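/- arXiv:1206.0219 — 4 statements merged into one kernel-verified Lean document; each statement's English description precedes it below -/
import Mathlib

section
/- Let δ be a Young diagram of height < r and let δ_0 = δ, δ_1, δ_2, … be the sequence produced by the staircase algorithm: δ_1 is obtained from δ_0 by adding boxes to the first column until it has height r, and for k ≥ 2, δ_k is obtained from δ_{k−1} by adding boxes to the k-th column until its height is one more than the height of the (k−1)-th column of δ_0. Then, writing h_k for the height of the k-th column of δ and δ = (δ^1, …, δ^{r−1}), one has δ_k = (δ^1, …, δ^{h_k}, k, δ^{h_k+1}+1, …, δ^{r−1}+1) for all k ≥ 1. -/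
/-- `colHt f j` : height of the `j`-th column (`j ≥ 1`) of the Young diagram with
0-indexed row lengths `f`, i.e. the number of rows of length at least `j`. -/
noncomputable def colHt (f : ℕ → ℕ) (j : ℕ) : ℕ := sInf {i | f i < j}

/-- Add boxes to column `k` so that rows `0,…,t-1` reach length at least `k`,
i.e. the `k`-th column reaches height `t`. -/
def addCol (f : ℕ → ℕ) (k t : ℕ) : ℕ → ℕ :=
  fun i => if i < t then max (f i) k else f i

/-- The staircase algorithm with parameter `r` applied to a Young diagram `f` of
height `< r`: stage 1 adds boxes to the first column until it reaches height `r`;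
stage `k ≥ 2` adds boxes to the `k`-th column until its height is one more than the
height of the `(k-1)`-th column of the starting diagram. `staircase r f k` is `δ_k`. -/
noncomputable def staircase (r : ℕ) (f : ℕ → ℕ) : ℕ → ℕ → ℕ
  | 0 => f
  | k + 1 => addCol (staircase r f k) (k + 1) (if k = 0 then r else colHt f k + 1)

/-! Since `f` is antitone, `i < colHt f j ↔ j ≤ f i`, so every stage is a rowwise comparison.
Writing `h_k = colHt f k`, stage `k + 1` only touches the rows `i ≤ h_k`: those below `h_{k+1}`
already have length `≥ k + 1`, row `h_{k+1}` receives the new box, and for `h_{k+1} < i ≤ h_k`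
the shifted row has length `f (i - 1) = k`, so `f (i - 1) + 1 = k + 1` is again what the
formula predicts. -/

section colHt

variable {f : ℕ → ℕ} {i j n r : ℕ}

theorem apply_colHt_lt (hn : f n < j) : f (colHt f j) < j :=
  Nat.sInf_mem (s := {i | f i < j}) ⟨n, hn⟩

theorem colHt_le (h : f i < j) : colHt f j ≤ i :=
  Nat.sInf_le h

theorem lt_colHt_iff (hf : Antitone f) (hn : f n < j) : i < colHt f j ↔ j ≤ f i := by
  refine ⟨fun h => ?_, fun h => ?_⟩
  · by_contra! hi
    exact (colHt_le hi).not_gt h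
  · by_contra! hi
    have := hf hi
    have := apply_colHt_lt hn
    omega

theorem colHt_lt (hr : 1 ≤ r) (hz : f (r - 1) = 0) (hj : 1 ≤ j) : colHt f j < r := by
  have : colHt f j ≤ r - 1 := colHt_le (by omega)
  omega

end colHt

/-- The diagram `(δ^1, …, δ^{h_k}, k, δ^{h_k+1}+1, …, δ^{r-1}+1)` with 0-indexed rows. -/
noncomputable def staircaseShape (r : ℕ) (f : ℕ → ℕ) (k i : ℕ) : ℕ :=
  if i < colHt f k then f i
  else if i = colHt f k then k
  else if i < r then f (i - 1) + 1
  else 0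

section staircaseShape

variable {r : ℕ} {f : ℕ → ℕ}

theorem addCol_one_eq_staircaseShape (hf : Antitone f) (hr : 1 ≤ r) (hz : f (r - 1) = 0) :
    addCol f 1 r = staircaseShape r f 1 := by
  funext i
  have hn : f (r - 1) < 1 := by omega
  have ha := colHt_lt hr hz le_rfl
  have hi := lt_colHt_iff (i := i) hf hn
  have hi' := lt_colHt_iff (i := i - 1) hf hn
  have hfi : r ≤ i → f i = 0 := fun h => by have := hf (show r - 1 ≤ i by omega); omega
  unfold addCol staircaseShape
  split_ifs <;> omega

theorem addCol_staircaseShape (hf : Antitone f) (hr : 1 ≤ r) (hz : f (r - 1) = 0)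
    {k : ℕ} (hk : 1 ≤ k) :
    addCol (staircaseShape r f k) (k + 1) (colHt f k + 1) = staircaseShape r f (k + 1) := by
  funext i
  have hn : f (r - 1) < k := by omega
  have hn' : f (r - 1) < k + 1 := by omega
  have hb := colHt_lt hr hz hk
  have hab : colHt f (k + 1) ≤ colHt f k := colHt_le ((apply_colHt_lt hn).trans k.lt_succ_self)
  have hi' := lt_colHt_iff (i := i - 1) hf hn
  have hsi := lt_colHt_iff (i := i) hf hn'
  have hsi' := lt_colHt_iff (i := i - 1) hf hn'
  unfold addCol staircaseShape
  split_ifs <;> omega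

end staircaseShape

/-- Explicit description of the diagrams produced by the staircase algorithm:
writing `h_k = colHt f k`, the diagram `δ_k` is
`(δ^1, …, δ^{h_k}, k, δ^{h_k+1}+1, …, δ^{r-1}+1)` (here 0-indexed rows). -/
theorem stmt2 (r : ℕ) (f : ℕ → ℕ) (hr : 1 ≤ r)
    (hmono : ∀ i j, i ≤ j → f j ≤ f i)
    (hht : ∀ i, r - 1 ≤ i → f i = 0) :
    ∀ k, 1 ≤ k → ∀ i,
      staircase r f k i =
        if i < colHt f k then f i
        else if i = colHt f k then k
        else if i < r then f (i - 1) + 1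
        else 0 := by
  have hz : f (r - 1) = 0 := hht _ le_rfl
  suffices h : ∀ k, 1 ≤ k → staircase r f k = staircaseShape r f k from
    fun k hk => congrFun (h k hk)
  intro k hk
  induction k, hk using Nat.le_induction with
  | base => exact addCol_one_eq_staircaseShape hmono hr hz
  | succ k hk ih =>
    rw [staircase, ih, if_neg (by omega)]
    exact addCol_staircaseShape hmono hr hz hk
end

section
/- Let δ be a Young diagram of height < r and width ≤ d − r + 1 (with 0 < r ≤ d), let δ_0, …, δ_K be the staircase sequence (K = d − r + 1), and set ε_k = c_{d−r+1, r}(δ_k), the rotated complement of δ_k inside the (d−r+1)×r rectangle. Then the width of ε_0 is exactly d − r + 1, the width of ε_k is strictly less than d − r + 1 for all k ≥ 1, and the height of ε_k is at most r for all k ≤ K. -/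
/-! Every stage `δ_k` with `k ≥ 1` contains the full first column of height `r`, so its last
row is nonempty and the first row of the complement `ε_k` is shorter than `d - r + 1`; before
the first stage that row of `δ_0` is empty. The complement of anything has at most `r` rows. -/

def ydComp (w h : ℕ) (f : ℕ → ℕ) : ℕ → ℕ :=
  fun i => if i < h then w - f (h - 1 - i) else 0

lemma ydComp_zero {w h : ℕ} (f : ℕ → ℕ) (hh : 0 < h) : ydComp w h f 0 = w - f (h - 1) := by
  simp [ydComp, hh]

lemma ydComp_of_le {w h i : ℕ} (f : ℕ → ℕ) (hi : h ≤ i) : ydComp w h f i = 0 := by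
  simp [ydComp, Nat.not_lt.mpr hi]

lemma le_addCol (f : ℕ → ℕ) (k t i : ℕ) : f i ≤ addCol f k t i := by
  unfold addCol
  split_ifs
  exacts [le_max_left _ _, le_rfl]

lemma staircase_one_apply_of_lt {r i : ℕ} (f : ℕ → ℕ) (hi : i < r) :
    staircase r f 1 i = max (f i) 1 := by
  simp [staircase, addCol, hi]

lemma staircase_le_succ (r : ℕ) (f : ℕ → ℕ) (k i : ℕ) :
    staircase r f k i ≤ staircase r f (k + 1) i :=
  le_addCol _ _ _ _

lemma one_le_staircase {r i k : ℕ} (f : ℕ → ℕ) (hi : i < r) (hk : 1 ≤ k) :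
    1 ≤ staircase r f k i := by
  induction k, hk using Nat.le_induction with
  | base => exact (staircase_one_apply_of_lt f hi).symm ▸ le_max_right _ _
  | succ k _ ih => exact ih.trans (staircase_le_succ r f k i)

theorem stmt8_general (d r : ℕ) (f : ℕ → ℕ) (hr : 0 < r)
    (hht : ∀ i, r - 1 ≤ i → f i = 0) :
    ydComp (d - r + 1) r (staircase r f 0) 0 = d - r + 1 ∧
      (∀ k, 1 ≤ k → k ≤ d - r + 1 →
        ydComp (d - r + 1) r (staircase r f k) 0 < d - r + 1) ∧
      (∀ k, k ≤ d - r + 1 →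
        sInf {i | ydComp (d - r + 1) r (staircase r f k) i = 0} ≤ r) := by
  refine ⟨?_, fun k hk _ => ?_, fun k _ => Nat.sInf_le (ydComp_of_le _ le_rfl)⟩
  · rw [ydComp_zero _ hr, staircase, hht (r - 1) le_rfl, Nat.sub_zero]
  · have hlast := one_le_staircase f (Nat.sub_lt hr one_pos) hk
    rw [ydComp_zero _ hr]
    omega

/-- Setting `ε_k = c_{d-r+1,r}(δ_k)`: the width of `ε_0` is exactly `d - r + 1`,
the width of `ε_k` is `< d - r + 1` for `1 ≤ k ≤ K`, and the height of `ε_k`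
(computed as `sInf {i | ε_k i = 0}`) is at most `r` for all `k ≤ K`, where
`K = d - r + 1`. -/
theorem stmt8 (d r : ℕ) (f : ℕ → ℕ) (hr : 0 < r) (hrd : r ≤ d)
    (hmono : ∀ i j, i ≤ j → f j ≤ f i)
    (hht : ∀ i, r - 1 ≤ i → f i = 0)
    (hwidth : f 0 ≤ d - r + 1) :
    ydComp (d - r + 1) r (staircase r f 0) 0 = d - r + 1 ∧
      (∀ k, 1 ≤ k → k ≤ d - r + 1 →
        ydComp (d - r + 1) r (staircase r f k) 0 < d - r + 1) ∧
      (∀ k, k ≤ d - r + 1 →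
        sInf {i | ydComp (d - r + 1) r (staircase r f k) i = 0} ≤ r) :=
  stmt8_general d r f hr hht
end

section
/- Let δ be a Young diagram of height < r and width ≤ d − r + 1, with staircase sequence δ_0, δ_1, … and box counts s_k, and suppose the width of δ equals d − r + 1 in case k = 0. For each k ≤ d − r + 1 such that δ_k has width d − r + 1, the diagram ĥδ_k obtained from δ_k by deleting its first row satisfies: the sequence ĥδ_0, ĥδ_1, … equals the staircase sequence obtained by applying the staircase algorithm with parameter r − 1 to the starting diagram ĥδ_0, and the number of boxes added agrees: |ĥδ_k| − |ĥδ_0| = s_k. -/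
lemma addCol_apply_zero {f : ℕ → ℕ} {k t : ℕ} (ht : 0 < t) (hk : k ≤ f 0) :
    addCol f k t 0 = f 0 := by
  simp [addCol, ht, hk]

lemma addCol_succ_apply_succ (f : ℕ → ℕ) (k t i : ℕ) :
    addCol f k (t + 1) (i + 1) = addCol (fun i => f (i + 1)) k t i := by
  simp [addCol]

lemma colHt_eq_colHt_tail_add_one {f : ℕ → ℕ} {j : ℕ} (hj : j ≤ f 0) (hlt : ∃ i, f i < j) :
    colHt f j = colHt (fun i => f (i + 1)) j + 1 := by
  have hpos : 1 ≤ sInf {i | f i < j} := by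
    rw [Nat.one_le_iff_ne_zero, Ne, Nat.sInf_eq_zero, not_or]
    exact ⟨by simpa using hj, Set.nonempty_iff_ne_empty.mp hlt⟩
  exact (Nat.sInf_add hpos).symm

lemma staircase_apply_zero {r : ℕ} {f : ℕ → ℕ} (hr : 0 < r) :
    ∀ k ≤ f 0, staircase r f k 0 = f 0
  | 0, _ => rfl
  | k + 1, hk => by
    have ht : 0 < if k = 0 then r else colHt f k + 1 := by split <;> omega
    have ih : staircase r f k 0 = f 0 := staircase_apply_zero hr k (by omega)
    rw [staircase, addCol_apply_zero ht (by omega), ih]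

lemma staircase_succ_tail (r : ℕ) {f : ℕ → ℕ} (hzero : ∃ i, f i = 0) :
    ∀ k ≤ f 0 + 1,
      (fun i => staircase (r + 1) f k (i + 1)) = staircase r (fun i => f (i + 1)) k
  | 0, _ => rfl
  | k + 1, hk => by
    have htarget : (if k = 0 then r + 1 else colHt f k + 1) =
        (if k = 0 then r else colHt (fun i => f (i + 1)) k + 1) + 1 := by
      split_ifs with hk0
      · rfl
      · obtain ⟨i₀, hi₀⟩ := hzero
        rw [colHt_eq_colHt_tail_add_one (by omega) ⟨i₀, by omega⟩]
    funext i
    rw [staircase, htarget, addCol_succ_apply_succ, staircase_succ_tail r hzero k (by omega),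
      staircase]

theorem stmt11_general (d r : ℕ) (f : ℕ → ℕ) (hr : 0 < r)
    (hht : ∀ i, r - 1 ≤ i → f i = 0)
    (hwidth : f 0 = d - r + 1) :
    ∀ k, k ≤ d - r + 1 →
      (fun i => staircase r f k (i + 1)) = staircase (r - 1) (fun i => f (i + 1)) k ∧
        (∑ i ∈ Finset.range (r - 1), staircase (r - 1) (fun i => f (i + 1)) k i) -
            (∑ i ∈ Finset.range (r - 1), f (i + 1)) =
          (∑ i ∈ Finset.range r, staircase r f k i) - (∑ i ∈ Finset.range r, f i) := by
  intro k hk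
  obtain ⟨m, rfl⟩ : ∃ m, r = m + 1 := ⟨r - 1, by omega⟩
  rw [Nat.add_sub_cancel] at hht ⊢
  have hshift := staircase_succ_tail m ⟨m, hht m le_rfl⟩ k (by omega)
  refine ⟨hshift, ?_⟩
  rw [Finset.sum_range_succ', Finset.sum_range_succ' f, staircase_apply_zero hr k (by omega),
    Nat.add_sub_add_right]
  simp only [← congrFun hshift]

/-- For `δ` of height `< r` and width exactly `d - r + 1` (so each `δ_k` has width
`d - r + 1`), deleting the first row of each `δ_k` yields exactly the staircase
sequence with parameter `r - 1` applied to the first-row-deleted diagram, and the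
box counts agree: `|δ̂_k| - |δ̂_0| = s_k`. -/
theorem stmt11 (d r : ℕ) (f : ℕ → ℕ) (hr : 0 < r) (hrd : r ≤ d)
    (hmono : ∀ i j, i ≤ j → f j ≤ f i)
    (hht : ∀ i, r - 1 ≤ i → f i = 0)
    (hwidth : f 0 = d - r + 1) :
    ∀ k, k ≤ d - r + 1 →
      (fun i => staircase r f k (i + 1)) = staircase (r - 1) (fun i => f (i + 1)) k ∧
        (∑ i ∈ Finset.range (r - 1), staircase (r - 1) (fun i => f (i + 1)) k i) -
            (∑ i ∈ Finset.range (r - 1), f (i + 1)) =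
          (∑ i ∈ Finset.range r, staircase r f k i) - (∑ i ∈ Finset.range r, f i) :=
  stmt11_general d r f hr hht hwidth
end

section
/- Let r ≥ 1 and δ = (δ^1, …, δ^{r−1}) a partition of height < r; set δ^0 = ∞. For i ≥ 0 let α(i) = (δ^1, …, δ^{r−1}, i). If there is an integer 0 ≤ l ≤ r − 1 with δ^{r−l} < i − l ≤ δ^{r−l−1}, then the cycle w = (r−l, r−l+1, …, r) ∈ S_r has length l and satisfies w • α(i) = (δ^1, …, δ^{r−l−1}, i−l, δ^{r−l}+1, …, δ^{r−1}+1), which is a dominant weight (non-increasing). -/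
/-- `ρ = (r, r-1, …, 1)` as a function on `Fin r` (0-indexed). -/
def rho (r : ℕ) (i : Fin r) : ℤ := (r : ℤ) - (i : ℤ)

/-- The dot (ρ-shifted) action `w • α = w(α + ρ) - ρ` of the Weyl group `S_r` on
integer weights of `GL_r` (the symmetric group permutes coordinates). -/
def dotAct {r : ℕ} (w : Equiv.Perm (Fin r)) (a : Fin r → ℤ) : Fin r → ℤ :=
  fun i => a (w.symm i) + rho r (w.symm i) - rho r i

/-- The weight `α(i) = (δ^1, …, δ^{r-1}, i)`, where the partition `δ` is given by
its 0-indexed row lengths `f` (so `δ^j = f (j-1)`). -/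
def alphaWt (r : ℕ) (f : ℕ → ℕ) (i : ℕ) : Fin r → ℤ :=
  fun j => if (j : ℕ) < r - 1 then (f j : ℤ) else (i : ℤ)

/-- A weight is dominant if its entries are non-increasing. -/
def Dominant {r : ℕ} (a : Fin r → ℤ) : Prop := ∀ j k : Fin r, j ≤ k → a k ≤ a j

/-- The Coxeter length of a permutation: its number of inversions. -/
def inversions {r : ℕ} (w : Equiv.Perm (Fin r)) : ℕ :=
  (Finset.univ.filter fun p : Fin r × Fin r => p.1 < p.2 ∧ w p.2 < w p.1).card

/-- A weight is regular for the dot action iff `α + ρ` has pairwise distinct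
entries. -/
def RegularWt {r : ℕ} (a : Fin r → ℤ) : Prop :=
  Function.Injective fun j => a j + rho r j

/-!
Write `m = r - 1 - l`.  The cycle `w` moves the last entry of `α(i) + ρ` to position `m` and
shifts the entries in positions `m, …, r - 2` one step to the right, so the dot action raises each
shifted entry by one and lowers the moved entry `i` by the `l` positions it travels.  Its only
inversions are the `l` pairs `(a, r - 1)` with `m ≤ a < r - 1`.  Dominance of the result is the
chain `δ^{r-l} < i - l ≤ δ^{r-l-1}` together with the monotonicity of `δ`.
-/

def IsShiftCycle {r : ℕ} (w : Equiv.Perm (Fin r)) (m : ℕ) : Prop :=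
  ∀ j : Fin r, (w j : ℕ) = if (j : ℕ) = r - 1 then m else if m ≤ (j : ℕ) then (j : ℕ) + 1 else j

/-- The weight `(f 0, …, f (m - 1), v, f m + 1, …, f (r - 2) + 1)`. -/
def insertShiftWt (r : ℕ) (f : ℕ → ℕ) (m : ℕ) (v : ℤ) : Fin r → ℤ :=
  fun j => if (j : ℕ) < m then (f j : ℤ) else if (j : ℕ) = m then v else (f ((j : ℕ) - 1) : ℤ) + 1

lemma dotAct_apply {r : ℕ} (w : Equiv.Perm (Fin r)) (a : Fin r → ℤ) (j : Fin r) :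
    dotAct w a j = a (w.symm j) + (j : ℤ) - (w.symm j : ℤ) := by
  simp only [dotAct, rho]
  ring

namespace IsShiftCycle

variable {r m : ℕ} {w : Equiv.Perm (Fin r)}

lemma symm_apply (hw : IsShiftCycle w m) (hm : m < r) (j : Fin r) :
    (w.symm j : ℕ) = if (j : ℕ) = m then r - 1 else if m ≤ (j : ℕ) then (j : ℕ) - 1 else j := by
  have hj := hw (w.symm j)
  rw [w.apply_symm_apply] at hj
  have := (w.symm j).isLt
  split_ifs at hj ⊢ <;> omega

lemma inversion_iff (hw : IsShiftCycle w m) (hm : m < r) (a b : Fin r) :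
    (a < b ∧ w b < w a) ↔ ((b : ℕ) = r - 1 ∧ m ≤ (a : ℕ) ∧ (a : ℕ) < r - 1) := by
  have := a.isLt
  have := b.isLt
  rw [Fin.lt_def, Fin.lt_def, hw a, hw b]
  split_ifs <;> omega

lemma inversions_eq (hw : IsShiftCycle w m) (hm : m < r) : inversions w = r - 1 - m := by
  unfold inversions
  refine Finset.card_eq_of_bijective
    (fun t _ => ((⟨m + t, by omega⟩ : Fin r), (⟨r - 1, by omega⟩ : Fin r))) ?_ ?_ ?_
  · intro p hp
    obtain ⟨hb, hma, har⟩ := (hw.inversion_iff hm p.1 p.2).mp (Finset.mem_filter.mp hp).2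
    refine ⟨(p.1 : ℕ) - m, by omega, Prod.ext (Fin.ext ?_) (Fin.ext ?_)⟩ <;> simp only <;> omega
  · intro t ht
    refine Finset.mem_filter.mpr ⟨Finset.mem_univ _, (hw.inversion_iff hm _ _).mpr ?_⟩
    exact ⟨rfl, Nat.le_add_right m t, show m + t < r - 1 by omega⟩
  · intro t t' _ _ he
    simp only [Prod.mk.injEq, Fin.mk.injEq, and_true] at he
    omega

lemma dotAct_alphaWt (hw : IsShiftCycle w m) (hm : m < r) (f : ℕ → ℕ) (i : ℕ) :
    dotAct w (alphaWt r f i) = insertShiftWt r f m ((i : ℤ) - ((r - 1 - m : ℕ) : ℤ)) := by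
  funext j
  have hs := hw.symm_apply hm j
  have := j.isLt
  have := (w.symm j).isLt
  rw [dotAct_apply]
  simp only [alphaWt, insertShiftWt]
  split_ifs at hs ⊢ <;> simp only [hs] <;> omega

end IsShiftCycle

lemma dominant_insertShiftWt {r : ℕ} {f : ℕ → ℕ} (hf : Antitone f) {m : ℕ} {v : ℤ}
    (hlow : (f m : ℤ) < v) (hhigh : 0 < m → v ≤ f (m - 1)) :
    Dominant (insertShiftWt r f m v) := by
  intro j k hjk
  have hjk : (j : ℕ) ≤ k := hjk
  have := hf hjk
  have := hf (Nat.sub_le_sub_right hjk 1)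
  have : m ≤ k - 1 → f (k - 1) ≤ f m := fun h => hf h
  have : j < m → f (m - 1) ≤ f j := fun h => hf (by omega)
  simp only [insertShiftWt]
  split_ifs <;> omega

theorem stmt15_general (r : ℕ) (f : ℕ → ℕ) (hr : 1 ≤ r)
    (hmono : ∀ i j, i ≤ j → f j ≤ f i)
    (i l : ℕ) (hl : l ≤ r - 1)
    (hlow : f (r - l - 1) + l < i)
    (hhigh : l < r - 1 → i ≤ f (r - l - 2) + l)
    (w : Equiv.Perm (Fin r))
    (hw : ∀ j : Fin r, (w j : ℕ) =
      if (j : ℕ) = r - 1 then r - 1 - l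
      else if r - 1 - l ≤ (j : ℕ) then (j : ℕ) + 1 else (j : ℕ)) :
    inversions w = l ∧
      (∀ j : Fin r, dotAct w (alphaWt r f i) j =
        if (j : ℕ) < r - 1 - l then (f j : ℤ)
        else if (j : ℕ) = r - 1 - l then (i : ℤ) - (l : ℤ)
        else (f ((j : ℕ) - 1) : ℤ) + 1) ∧
      Dominant (dotAct w (alphaWt r f i)) := by
  have hcycle : IsShiftCycle w (r - 1 - l) := hw
  have hm : r - 1 - l < r := by omega
  have hl' : r - 1 - (r - 1 - l) = l := by omega
  have hdot := hcycle.dotAct_alphaWt hm f i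
  rw [hl'] at hdot
  refine ⟨hl' ▸ hcycle.inversions_eq hm, fun j => by rw [hdot]; rfl, ?_⟩
  rw [hdot]
  refine dominant_insertShiftWt (fun a b => hmono a b) ?_ fun hpos => ?_
  · rw [show r - 1 - l = r - l - 1 by omega]
    omega
  · rw [show r - 1 - l - 1 = r - l - 2 by omega]
    have := hhigh (by omega)
    omega

/-- If `δ^{r-l} < i - l ≤ δ^{r-l-1}` (the upper bound being vacuous for
`l = r - 1`), then the cycle `w = (r-l, r-l+1, …, r)` — which sends position `r`
to position `r-l` and shifts positions `r-l, …, r-1` up by one — has length `l`,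
and `w • α(i) = (δ^1, …, δ^{r-l-1}, i-l, δ^{r-l}+1, …, δ^{r-1}+1)`, which is a
dominant weight.  (All positions are converted to 0-indexing on `Fin r`.) -/
theorem stmt15 (r : ℕ) (f : ℕ → ℕ) (hr : 1 ≤ r)
    (hmono : ∀ i j, i ≤ j → f j ≤ f i)
    (hht : ∀ i, r - 1 ≤ i → f i = 0)
    (i l : ℕ) (hl : l ≤ r - 1)
    (hlow : f (r - l - 1) + l < i)
    (hhigh : l < r - 1 → i ≤ f (r - l - 2) + l)
    (w : Equiv.Perm (Fin r))
    (hw : ∀ j : Fin r, (w j : ℕ) =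
      if (j : ℕ) = r - 1 then r - 1 - l
      else if r - 1 - l ≤ (j : ℕ) then (j : ℕ) + 1 else (j : ℕ)) :
    inversions w = l ∧
      (∀ j : Fin r, dotAct w (alphaWt r f i) j =
        if (j : ℕ) < r - 1 - l then (f j : ℤ)
        else if (j : ℕ) = r - 1 - l then (i : ℤ) - (l : ℤ)
        else (f ((j : ℕ) - 1) : ℤ) + 1) ∧
      Dominant (dotAct w (alphaWt r f i)) :=
  stmt15_general r f hr hmono i l hl hlow hhigh w hw
end
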